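/- For any Dirichlet character χ, any real t, and any x ≥ 4, with σ₁ = 1/2 + 1/log x, one has |∑_{n<x²} Λ_x(n)χ(n) n^{-(σ₁+it)}| ≤ ∑_{n<x} Λ(n) n^{-1/2} + (1/log x)·∑_{x≤n≤x²} Λ(n)·log(x²/n)·n^{-1/2} = O(x/log x), with an absolute implied constant. -/

import Mathlib

open Complex Real ArithmeticFunction

/-- Selberg's truncated von Mangoldt function `Λ_x`. -/
noncomputable def Lambdax (x : ℝ) (n : ℕ) : ℝ :=
  if (n : ℝ) ≤ x then vonMangoldt n
  else if (n : ℝ) ≤ x ^ 2 then vonMangoldt n * (Real.log (x ^ 2 / n) / Real.log x)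
  else 0

/-- The Dirichlet polynomial `∑_{n<x²} Λ_x(n) χ(n) n^{-s}`. -/
noncomputable def Dpoly {q : ℕ} (χ : DirichletCharacter ℂ q) (x : ℝ) (s : ℂ) : ℂ :=
  ∑ n ∈ Finset.filter (fun n : ℕ => (n : ℝ) < x ^ 2) (Finset.range (⌈x ^ 2⌉₊ + 1)),
    (Lambdax x n : ℂ) * χ n / (n : ℂ) ^ s

/-!
The character has modulus at most `1` and `Re s ≥ 1/2`, so the triangle inequality bounds the
Dirichlet polynomial termwise by `Λ_x(n) / √n`, and `Λ_x` splits into the two stated sums. Both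
are sums of `Λ(n)` against a decreasing weight: partial summation against Chebyshev's bound
`ψ(N) ≤ (log 4 + 4) N` reduces the first to `∑_{n ≤ x} n^{-1/2} ≤ 2 √x`, and, after
`log (x²/n) ≤ 4 (x²/n)^{1/4}`, the second to `√x ∑_{n ≤ x²} n^{-3/4} ≤ 4 x`. Finally
`√x ≤ 2 x / log x`.
-/

open Finset

theorem sum_mul_le_of_sum_le_mul {a f : ℕ → ℝ} {C : ℝ}
    (ha : ∀ N : ℕ, ∑ n ∈ Ioc 0 N, a n ≤ C * N) (hf : AntitoneOn f (Set.Ici 1))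
    (hf₀ : ∀ n, 0 ≤ f n) (M : ℕ) :
    ∑ n ∈ Ioc 0 M, a n * f n ≤ C * ∑ n ∈ Ioc 0 M, f n := by
  -- Abel summation: the defect `C m - ∑_{n ≤ m} a n ≥ 0` is carried along with weight `f m`.
  have key : ∀ m, ∑ n ∈ Ioc 0 m, a n * f n + (C * m - ∑ n ∈ Ioc 0 m, a n) * f m
      ≤ C * ∑ n ∈ Ioc 0 m, f n := by
    intro m
    induction m with
    | zero => simp
    | succ m ih =>
      simp only [sum_Ioc_succ_top (Nat.zero_le m), Nat.cast_succ]
      have hdef : 0 ≤ C * m - ∑ n ∈ Ioc 0 m, a n := sub_nonneg.2 (ha m)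
      have hmono : (C * m - ∑ n ∈ Ioc 0 m, a n) * f (m + 1)
          ≤ (C * m - ∑ n ∈ Ioc 0 m, a n) * f m := by
        rcases Nat.eq_zero_or_pos m with rfl | hm
        · simp
        exact mul_le_mul_of_nonneg_left
          (hf (Set.mem_Ici.2 hm) (Set.mem_Ici.2 (by omega)) (by omega)) hdef
      nlinarith
  nlinarith [key M, mul_nonneg (sub_nonneg.2 (ha M)) (hf₀ M)]

theorem sum_Ioc_rpow_sub_one_le {β : ℝ} (hβ₀ : 0 < β) (hβ₁ : β ≤ 1) (N : ℕ) :
    ∑ n ∈ Ioc 0 N, (n : ℝ) ^ (β - 1) ≤ (N : ℝ) ^ β / β := by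
  induction N with
  | zero => simp [zero_rpow hβ₀.ne']
  | succ m ih =>
    rw [sum_Ioc_succ_top (Nat.zero_le m)]
    have hm : (0 : ℝ) < m + 1 := by positivity
    -- Bernoulli: `m ^ β = (m + 1) ^ β (1 - 1 / (m + 1)) ^ β ≤ (m + 1) ^ β - β (m + 1) ^ (β - 1)`.
    have hbern : (1 + -(1 / ((m : ℝ) + 1))) ^ β ≤ 1 + β * -(1 / ((m : ℝ) + 1)) :=
      rpow_one_add_le_one_add_mul_self
        (by rw [neg_le_neg_iff]; exact div_le_one_of_le₀ (by linarith) hm.le) hβ₀.le hβ₁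
    have hstep : (m : ℝ) ^ β ≤ ((m : ℝ) + 1) ^ β - β * ((m : ℝ) + 1) ^ (β - 1) := by
      have hfrac : (1 + -(1 / ((m : ℝ) + 1))) = (m : ℝ) / (m + 1) := by field_simp; ring
      rw [hfrac, div_rpow (Nat.cast_nonneg m) hm.le, div_le_iff₀ (by positivity)] at hbern
      rw [rpow_sub_one hm.ne']
      have := rpow_pos_of_pos hm β
      calc (m : ℝ) ^ β ≤ (1 + β * -(1 / ((m : ℝ) + 1))) * ((m : ℝ) + 1) ^ β := hbern
        _ = _ := by field_simp; ring
    push_cast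
    rw [le_div_iff₀ hβ₀] at ih ⊢
    nlinarith

theorem sum_vonMangoldt_mul_rpow_sub_one_le {β : ℝ} (hβ₀ : 0 < β) (hβ₁ : β ≤ 1) {y : ℝ}
    (hy : 0 ≤ y) :
    ∑ n ∈ Ioc 0 ⌊y⌋₊, Λ n * (n : ℝ) ^ (β - 1) ≤ (Real.log 4 + 4) * (y ^ β / β) := by
  have hψ (N : ℕ) : ∑ n ∈ Ioc 0 N, (Λ n : ℝ) ≤ (Real.log 4 + 4) * N := by
    simpa [Chebyshev.psi] using Chebyshev.psi_le_const_mul_self (Nat.cast_nonneg (α := ℝ) N)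
  have hanti : AntitoneOn (fun n : ℕ => (n : ℝ) ^ (β - 1)) (Set.Ici 1) :=
    fun m hm n _ hmn => rpow_le_rpow_of_nonpos (by exact_mod_cast hm) (by exact_mod_cast hmn)
      (by linarith)
  calc ∑ n ∈ Ioc 0 ⌊y⌋₊, Λ n * (n : ℝ) ^ (β - 1)
      ≤ (Real.log 4 + 4) * ∑ n ∈ Ioc 0 ⌊y⌋₊, (n : ℝ) ^ (β - 1) :=
        sum_mul_le_of_sum_le_mul hψ hanti (fun n => rpow_nonneg n.cast_nonneg _) _
    _ ≤ (Real.log 4 + 4) * ((⌊y⌋₊ : ℝ) ^ β / β) := by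
        gcongr
        exact sum_Ioc_rpow_sub_one_le hβ₀ hβ₁ _
    _ ≤ (Real.log 4 + 4) * (y ^ β / β) := by
        gcongr
        exact Nat.floor_le hy

theorem log_div_div_sqrt_le {y n : ℝ} (hy : 0 ≤ y) (hn : 0 < n) :
    Real.log (y / n) / √n ≤ 4 * y ^ (1 / 4 : ℝ) * n ^ ((1 / 4 : ℝ) - 1) := by
  calc Real.log (y / n) / √n ≤ (y / n) ^ (1 / 4 : ℝ) / (1 / 4) / √n := by
        gcongr
        exact log_le_rpow_div (by positivity) (by norm_num)
    _ = 4 * y ^ (1 / 4 : ℝ) * n ^ ((1 / 4 : ℝ) - 1) := by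
        rw [div_rpow hy hn.le, sqrt_eq_rpow, show (1 / 4 : ℝ) - 1 = -(1 / 4 + 1 / 2) by norm_num,
          rpow_neg hn.le, rpow_add hn]
        ring

theorem sqrt_le_two_mul_div_log {x : ℝ} (hx : 1 < x) : √x ≤ 2 * (x / Real.log x) := by
  have hlog : Real.log x ≤ √x / (1 / 2) := by
    simpa [sqrt_eq_rpow] using log_le_rpow_div (x := x) (by linarith) (by norm_num : (0:ℝ) < 1 / 2)
  rw [mul_div_assoc', le_div_iff₀ (log_pos hx)]
  nlinarith [mul_self_sqrt (by linarith : (0:ℝ) ≤ x), sqrt_nonneg x]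

theorem norm_mul_div_natCast_cpow_le {a : ℝ} (ha : 0 ≤ a) {z : ℂ} (hz : ‖z‖ ≤ 1) (n : ℕ)
    {s : ℂ} (hs : 1 / 2 ≤ s.re) : ‖(a : ℂ) * z / (n : ℂ) ^ s‖ ≤ a / √n := by
  rcases Nat.eq_zero_or_pos n with rfl | hn
  · have hs0 : s ≠ 0 := fun h => by norm_num [h] at hs
    simp [zero_cpow hs0]
  rw [norm_div, norm_mul, norm_real, norm_of_nonneg ha, norm_natCast_cpow_of_pos hn]
  have hsqrt : √n ≤ (n : ℝ) ^ s.re := by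
    rw [sqrt_eq_rpow]
    exact rpow_le_rpow_of_exponent_le (by exact_mod_cast hn) hs
  gcongr
  exact mul_le_of_le_one_right ha hz

theorem Lambdax_nonneg {x : ℝ} (hx : 1 ≤ x) (n : ℕ) : 0 ≤ Lambdax x n := by
  unfold Lambdax
  split_ifs with h₁ h₂
  · exact vonMangoldt_nonneg
  · have hn : (0 : ℝ) < n := by linarith [not_le.1 h₁]
    have : 0 ≤ Real.log (x ^ 2 / n) := Real.log_nonneg (by rwa [le_div_iff₀ hn, one_mul])
    have : 0 ≤ Real.log x := Real.log_nonneg hx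
    positivity
  · exact le_rfl

theorem Lambdax_of_le {x : ℝ} {n : ℕ} (h : (n : ℝ) ≤ x) : Lambdax x n = Λ n := if_pos h

theorem Lambdax_of_le_of_le {x : ℝ} (hx : 1 < x) {n : ℕ} (h₁ : x ≤ n) (h₂ : (n : ℝ) ≤ x ^ 2) :
    Lambdax x n = Λ n * (Real.log (x ^ 2 / n) / Real.log x) := by
  rcases h₁.eq_or_lt with h | h
  · -- at `n = x` the two branches of `Lambdax` agree
    have hlog : Real.log x ≠ 0 := (log_pos hx).ne'
    rw [Lambdax_of_le h.ge, ← h, sq, mul_div_assoc, div_self (by positivity), mul_one,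
      div_self hlog, mul_one]
  · rw [Lambdax, if_neg (not_le.2 h), if_pos h₂]

theorem norm_Dpoly_le {q : ℕ} (χ : DirichletCharacter ℂ q) {x : ℝ} (hx : 1 ≤ x) {s : ℂ}
    (hs : 1 / 2 ≤ s.re) :
    ‖Dpoly χ x s‖ ≤ ∑ n ∈ filter (fun n : ℕ => (n : ℝ) < x ^ 2) (range (⌈x ^ 2⌉₊ + 1)),
      Lambdax x n / √n :=
  (norm_sum_le _ _).trans <| sum_le_sum fun n _ =>
    norm_mul_div_natCast_cpow_le (Lambdax_nonneg hx n) (χ.norm_le_one n) n hs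

theorem sum_Lambdax_div_sqrt_le {x : ℝ} (hx : 1 < x) :
    ∑ n ∈ filter (fun n : ℕ => (n : ℝ) < x ^ 2) (range (⌈x ^ 2⌉₊ + 1)), Lambdax x n / √n
      ≤ (∑ n ∈ filter (fun n : ℕ => (n : ℝ) < x) (range (⌈x⌉₊ + 1)), Λ n / √n)
        + (1 / Real.log x) * ∑ n ∈ filter (fun n : ℕ => x ≤ (n : ℝ) ∧ (n : ℝ) ≤ x ^ 2)
            (range (⌈x ^ 2⌉₊ + 1)), Λ n * Real.log (x ^ 2 / n) / √n := by
  rw [← sum_filter_add_sum_filter_not _ (fun n : ℕ => (n : ℝ) < x), mul_sum]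
  gcongr ?_ + ?_
  · calc _ = ∑ n ∈ filter (fun n : ℕ => (n : ℝ) < x)
            (filter (fun n : ℕ => (n : ℝ) < x ^ 2) (range (⌈x ^ 2⌉₊ + 1))), Λ n / √n :=
          sum_congr rfl fun n hn => by rw [Lambdax_of_le (mem_filter.1 hn).2.le]
      _ ≤ _ := by
          refine sum_le_sum_of_subset_of_nonneg (fun n hn => ?_) fun n _ _ =>
            div_nonneg vonMangoldt_nonneg (sqrt_nonneg _)
          simp only [mem_filter, mem_range] at hn ⊢
          exact ⟨(Nat.lt_ceil.2 hn.2).trans (Nat.lt_succ_self _), hn.2⟩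
  · have hlog : 0 < Real.log x := log_pos hx
    calc _ = ∑ n ∈ filter (fun n : ℕ => ¬(n : ℝ) < x)
            (filter (fun n : ℕ => (n : ℝ) < x ^ 2) (range (⌈x ^ 2⌉₊ + 1))),
            1 / Real.log x * (Λ n * Real.log (x ^ 2 / n) / √n) := by
          refine sum_congr rfl fun n hn => ?_
          simp only [mem_filter, not_lt] at hn
          rw [Lambdax_of_le_of_le hx hn.2 hn.1.2.le]
          ring
      _ ≤ _ := by
          refine sum_le_sum_of_subset_of_nonneg (fun n hn => ?_) fun n hn _ => ?_
          · simp only [mem_filter, not_lt] at hn ⊢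
            exact ⟨hn.1.1, hn.2, hn.1.2.le⟩
          · simp only [mem_filter] at hn
            have hn0 : (0 : ℝ) < n := by linarith [hn.2.1]
            have : 0 ≤ Real.log (x ^ 2 / n) :=
              Real.log_nonneg (by rw [le_div_iff₀ hn0, one_mul]; exact hn.2.2)
            have := vonMangoldt_nonneg (n := n)
            positivity

theorem sum_vonMangoldt_div_sqrt_le {x : ℝ} (hx : 0 ≤ x) :
    ∑ n ∈ filter (fun n : ℕ => (n : ℝ) < x) (range (⌈x⌉₊ + 1)), Λ n / √n
      ≤ (Real.log 4 + 4) * (2 * √x) := by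
  have hterm (n : ℕ) : Λ n / √n = Λ n * (n : ℝ) ^ ((1 / 2 : ℝ) - 1) := by
    rw [show (1 / 2 : ℝ) - 1 = -(1 / 2) by norm_num, rpow_neg n.cast_nonneg, ← sqrt_eq_rpow,
      div_eq_mul_inv]
  rw [← sum_erase (f := fun n : ℕ => Λ n / √n) (a := 0) _ (by simp)]
  calc _ ≤ ∑ n ∈ Ioc 0 ⌊x⌋₊, Λ n / √n := by
        refine sum_le_sum_of_subset_of_nonneg (fun n hn => ?_) fun n _ _ =>
          div_nonneg vonMangoldt_nonneg (sqrt_nonneg _)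
        simp only [mem_erase, mem_filter, mem_Ioc] at hn ⊢
        exact ⟨Nat.pos_of_ne_zero hn.1, Nat.le_floor hn.2.2.le⟩
    _ ≤ (Real.log 4 + 4) * (x ^ (1 / 2 : ℝ) / (1 / 2)) := by
        simp only [hterm]
        exact sum_vonMangoldt_mul_rpow_sub_one_le (by norm_num) (by norm_num) hx
    _ = (Real.log 4 + 4) * (2 * √x) := by rw [sqrt_eq_rpow]; ring

theorem sum_vonMangoldt_mul_log_div_sqrt_le {x : ℝ} (hx : 0 < x) :
    ∑ n ∈ filter (fun n : ℕ => x ≤ (n : ℝ) ∧ (n : ℝ) ≤ x ^ 2) (range (⌈x ^ 2⌉₊ + 1)),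
      Λ n * Real.log (x ^ 2 / n) / √n ≤ (Real.log 4 + 4) * (16 * x) := by
  have hx4 : (x ^ 2) ^ (1 / 4 : ℝ) * (x ^ 2) ^ (1 / 4 : ℝ) = x := by
    rw [← rpow_add (by positivity), ← rpow_natCast, ← rpow_mul hx.le]
    norm_num
  calc _ ≤ ∑ n ∈ filter (fun n : ℕ => x ≤ (n : ℝ) ∧ (n : ℝ) ≤ x ^ 2) (range (⌈x ^ 2⌉₊ + 1)),
        4 * (x ^ 2) ^ (1 / 4 : ℝ) * (Λ n * (n : ℝ) ^ ((1 / 4 : ℝ) - 1)) := by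
        refine sum_le_sum fun n hn => ?_
        have hn : (0 : ℝ) < n := hx.trans_le (mem_filter.1 hn).2.1
        calc Λ n * Real.log (x ^ 2 / n) / √n = Λ n * (Real.log (x ^ 2 / n) / √n) := by ring
          _ ≤ Λ n * (4 * (x ^ 2) ^ (1 / 4 : ℝ) * (n : ℝ) ^ ((1 / 4 : ℝ) - 1)) :=
            mul_le_mul_of_nonneg_left (log_div_div_sqrt_le (by positivity) hn) vonMangoldt_nonneg
          _ = _ := by ring
    _ ≤ ∑ n ∈ Ioc 0 ⌊x ^ 2⌋₊, 4 * (x ^ 2) ^ (1 / 4 : ℝ) * (Λ n * (n : ℝ) ^ ((1 / 4 : ℝ) - 1)) := by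
        refine sum_le_sum_of_subset_of_nonneg (fun n hn => ?_) fun n _ _ => ?_
        · simp only [mem_filter, mem_Ioc] at hn ⊢
          exact ⟨Nat.cast_pos.1 (hx.trans_le hn.2.1), Nat.le_floor hn.2.2⟩
        · have := vonMangoldt_nonneg (n := n)
          positivity
    _ ≤ 4 * (x ^ 2) ^ (1 / 4 : ℝ) * ((Real.log 4 + 4) * ((x ^ 2) ^ (1 / 4 : ℝ) / (1 / 4))) := by
        rw [← mul_sum]
        gcongr
        exact sum_vonMangoldt_mul_rpow_sub_one_le (by norm_num) (by norm_num) (by positivity)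
    _ = (Real.log 4 + 4) * (16 * x) := by linear_combination 16 * (Real.log 4 + 4) * hx4

theorem Dpoly_bound :
    ∃ C : ℝ, 0 < C ∧
      ∀ (q : ℕ) (χ : DirichletCharacter ℂ q) (t : ℝ) (x : ℝ), 4 ≤ x →
        ‖Dpoly χ x ((1 / 2 + 1 / Real.log x : ℝ) + t * Complex.I)‖
            ≤ (∑ n ∈ Finset.filter (fun n : ℕ => (n : ℝ) < x) (Finset.range (⌈x⌉₊ + 1)),
                vonMangoldt n / Real.sqrt n)
              + (1 / Real.log x) *
                ∑ n ∈ Finset.filter (fun n : ℕ => x ≤ (n : ℝ) ∧ (n : ℝ) ≤ x ^ 2)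
                    (Finset.range (⌈x ^ 2⌉₊ + 1)),
                  vonMangoldt n * Real.log (x ^ 2 / n) / Real.sqrt n
          ∧ (∑ n ∈ Finset.filter (fun n : ℕ => (n : ℝ) < x) (Finset.range (⌈x⌉₊ + 1)),
                vonMangoldt n / Real.sqrt n)
              + (1 / Real.log x) *
                ∑ n ∈ Finset.filter (fun n : ℕ => x ≤ (n : ℝ) ∧ (n : ℝ) ≤ x ^ 2)
                    (Finset.range (⌈x ^ 2⌉₊ + 1)),
                  vonMangoldt n * Real.log (x ^ 2 / n) / Real.sqrt n
            ≤ C * (x / Real.log x) := by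
  refine ⟨20 * (Real.log 4 + 4), by positivity, fun q χ t x hx => ?_⟩
  have hlog : 0 < Real.log x := log_pos (by linarith)
  refine ⟨(norm_Dpoly_le χ (by linarith) ?_).trans (sum_Lambdax_div_sqrt_le (by linarith)), ?_⟩
  · simp only [add_re, ofReal_re, mul_re, I_re, mul_zero, ofReal_im, I_im, mul_one, sub_self,
      add_zero, le_add_iff_nonneg_right]
    positivity
  calc _ ≤ (Real.log 4 + 4) * (2 * √x) + 1 / Real.log x * ((Real.log 4 + 4) * (16 * x)) := by
        gcongr
        · exact sum_vonMangoldt_div_sqrt_le (by linarith)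
        · exact sum_vonMangoldt_mul_log_div_sqrt_le (by linarith)
    _ ≤ (Real.log 4 + 4) * (2 * (2 * (x / Real.log x)))
        + 1 / Real.log x * ((Real.log 4 + 4) * (16 * x)) := by
        gcongr
        exact sqrt_le_two_mul_div_log (by linarith)
    _ = 20 * (Real.log 4 + 4) * (x / Real.log x) := by ring
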